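/- arXiv:2205.08546 — 3 statements merged into one kernel-verified Lean document; each statement's English description precedes it below -/
import Mathlib

section
/- Let A be the real vector space of families M : Fin m → Fin o → Matrix (Fin d) (Fin d) ℂ (with convex combinations taken entrywise). Let 𝓕 ⊆ A be nonempty, convex and compact, and let D : A → A → ℝ be continuous and satisfy: (i) D M N ≥ 0, (ii) D M N = 0 ↔ M = N, (iii) the triangle inequality D M N ≤ D M K + D K N, and (iv) joint convexity: for all η ∈ [0,1], D (η•M₁ + (1−η)•M₂) (η•N₁ + (1−η)•N₂) ≤ η·(D M₁ N₁) + (1−η)·(D M₂ N₂). Define R M = ⨅ F ∈ 𝓕, D M F. Then: R M ≥ 0 for all M; R M = 0 ↔ M ∈ 𝓕; R is convex, i.e. R (η•M + (1−η)•N) ≤ η·(R M) + (1−η)·(R N) for all η ∈ [0,1]; and for every map Λ : A → A with Λ '' 𝓕 ⊆ 𝓕 and D (Λ M) (Λ N) ≤ D M N for all M, N, one has R (Λ M) ≤ R M for all M. -/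
open Set

/-- On an empty `s` this is the junk value `0`. -/
noncomputable def infDistBy {E : Type*} (D : E → E → ℝ) (s : Set E) (x : E) : ℝ :=
  ⨅ y : s, D x y

section

variable {E : Type*} {D : E → E → ℝ} {s : Set E} {x y : E}

theorem infDistBy_nonneg (hD₀ : ∀ x y, 0 ≤ D x y) : 0 ≤ infDistBy D s x :=
  Real.iInf_nonneg fun y => hD₀ x y

theorem infDistBy_le (hD₀ : ∀ x y, 0 ≤ D x y) (hy : y ∈ s) : infDistBy D s x ≤ D x y :=
  ciInf_le (f := fun z : s => D x z) ⟨0, forall_mem_range.2 fun z => hD₀ x z⟩ ⟨y, hy⟩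

theorem infDistBy_map_le (hne : s.Nonempty) (hD₀ : ∀ x y, 0 ≤ D x y) {Λ : E → E}
    (hΛs : MapsTo Λ s s) (hΛD : ∀ x y, D (Λ x) (Λ y) ≤ D x y) (x : E) :
    infDistBy D s (Λ x) ≤ infDistBy D s x :=
  have : Nonempty s := hne.to_subtype
  le_ciInf fun y => (infDistBy_le hD₀ (hΛs y.2)).trans (hΛD x y)

theorem exists_mem_infDistBy_eq [TopologicalSpace E] (hs : IsCompact s) (hne : s.Nonempty)
    (hD : ∀ x, Continuous (D x)) (x : E) : ∃ y ∈ s, D x y = infDistBy D s x := by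
  obtain ⟨y, hy, hmin⟩ := hs.exists_isMinOn hne (hD x).continuousOn
  exact ⟨y, hy, (hmin.iInf_eq hy).symm⟩

theorem infDistBy_eq_zero_iff [TopologicalSpace E] (hs : IsCompact s) (hne : s.Nonempty)
    (hD : ∀ x, Continuous (D x)) (hD₀ : ∀ x y, 0 ≤ D x y) (hD_eq : ∀ x y, D x y = 0 ↔ x = y) :
    infDistBy D s x = 0 ↔ x ∈ s := by
  refine ⟨fun h => ?_, fun hx => ?_⟩
  · obtain ⟨y, hy, hxy⟩ := exists_mem_infDistBy_eq hs hne hD x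
    rwa [(hD_eq x y).1 (hxy.trans h)]
  · have := infDistBy_le (x := x) hD₀ hx
    rw [(hD_eq x x).2 rfl] at this
    exact this.antisymm (infDistBy_nonneg hD₀)

/-- Combine nearest points of `s` to the two endpoints. -/
theorem convexOn_infDistBy [AddCommGroup E] [Module ℝ E] [TopologicalSpace E]
    (hs : IsCompact s) (hne : s.Nonempty) (hconv : Convex ℝ s)
    (hD : ∀ x, Continuous (D x)) (hD₀ : ∀ x y, 0 ≤ D x y)
    (hD_conv : ∀ η : ℝ, 0 ≤ η → η ≤ 1 → ∀ x₁ x₂ y₁ y₂,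
      D (η • x₁ + (1 - η) • x₂) (η • y₁ + (1 - η) • y₂) ≤ η * D x₁ y₁ + (1 - η) * D x₂ y₂) :
    ConvexOn ℝ univ (infDistBy D s) := by
  refine ⟨convex_univ, fun x₁ _ x₂ _ a b ha hb hab => ?_⟩
  obtain rfl : b = 1 - a := by linarith
  obtain ⟨y₁, hy₁, h₁⟩ := exists_mem_infDistBy_eq hs hne hD x₁
  obtain ⟨y₂, hy₂, h₂⟩ := exists_mem_infDistBy_eq hs hne hD x₂
  calc infDistBy D s (a • x₁ + (1 - a) • x₂)
      ≤ D (a • x₁ + (1 - a) • x₂) (a • y₁ + (1 - a) • y₂) :=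
        infDistBy_le hD₀ (hconv hy₁ hy₂ ha hb hab)
    _ ≤ a * D x₁ y₁ + (1 - a) * D x₂ y₂ := hD_conv a ha (by linarith) x₁ x₂ y₁ y₂
    _ = a • infDistBy D s x₁ + (1 - a) • infDistBy D s x₂ := by rw [h₁, h₂]; rfl

end

theorem distance_induces_faithful_convex_monotone_general {m o d : ℕ}
    (𝓕 : Set (Fin m → Fin o → Matrix (Fin d) (Fin d) ℂ))
    (h𝓕ne : 𝓕.Nonempty) (h𝓕conv : Convex ℝ 𝓕) (h𝓕cpt : IsCompact 𝓕)
    (D : (Fin m → Fin o → Matrix (Fin d) (Fin d) ℂ) →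
         (Fin m → Fin o → Matrix (Fin d) (Fin d) ℂ) → ℝ)
    (hDcont : Continuous fun z : (Fin m → Fin o → Matrix (Fin d) (Fin d) ℂ) ×
        (Fin m → Fin o → Matrix (Fin d) (Fin d) ℂ) => D z.1 z.2)
    (hDnonneg : ∀ M N, 0 ≤ D M N)
    (hDfaithful : ∀ M N, D M N = 0 ↔ M = N)
    (hDjointconv : ∀ η : ℝ, 0 ≤ η → η ≤ 1 → ∀ M₁ M₂ N₁ N₂,
      D (η • M₁ + (1 - η) • M₂) (η • N₁ + (1 - η) • N₂)
        ≤ η * D M₁ N₁ + (1 - η) * D M₂ N₂)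
    (R : (Fin m → Fin o → Matrix (Fin d) (Fin d) ℂ) → ℝ)
    (hR : ∀ M, R M = ⨅ F : 𝓕, D M F) :
    (∀ M, 0 ≤ R M) ∧
    (∀ M, R M = 0 ↔ M ∈ 𝓕) ∧
    (∀ η : ℝ, 0 ≤ η → η ≤ 1 → ∀ M N,
      R (η • M + (1 - η) • N) ≤ η * R M + (1 - η) * R N) ∧
    (∀ Λ : (Fin m → Fin o → Matrix (Fin d) (Fin d) ℂ) →
           (Fin m → Fin o → Matrix (Fin d) (Fin d) ℂ),
      Λ '' 𝓕 ⊆ 𝓕 → (∀ M N, D (Λ M) (Λ N) ≤ D M N) → ∀ M, R (Λ M) ≤ R M) := by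
  obtain rfl : R = infDistBy D 𝓕 := funext hR
  have hD : ∀ M, Continuous (D M) := fun M => hDcont.comp (Continuous.prodMk_right M)
  refine ⟨fun M => infDistBy_nonneg hDnonneg,
    fun M => infDistBy_eq_zero_iff h𝓕cpt h𝓕ne hD hDnonneg hDfaithful,
    fun η hη₀ hη₁ M N => ?_,
    fun Λ hΛ𝓕 hΛD => infDistBy_map_le h𝓕ne hDnonneg (mapsTo_iff_image_subset.2 hΛ𝓕) hΛD⟩
  exact (convexOn_infDistBy h𝓕cpt h𝓕ne h𝓕conv hD hDnonneg hDjointconv).2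
    trivial trivial hη₀ (sub_nonneg.2 hη₁) (add_sub_cancel η 1)

/-- **Lemma 1 of the paper.** Any (jointly convex) distance function on the space of
families `M : Fin m → Fin o → Matrix (Fin d) (Fin d) ℂ` to a nonempty convex compact
free set `𝓕` induces a faithful (convex) resource monotone `R M = ⨅ F ∈ 𝓕, D M F`. -/
theorem distance_induces_faithful_convex_monotone {m o d : ℕ}
    (𝓕 : Set (Fin m → Fin o → Matrix (Fin d) (Fin d) ℂ))
    (h𝓕ne : 𝓕.Nonempty) (h𝓕conv : Convex ℝ 𝓕) (h𝓕cpt : IsCompact 𝓕)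
    (D : (Fin m → Fin o → Matrix (Fin d) (Fin d) ℂ) →
         (Fin m → Fin o → Matrix (Fin d) (Fin d) ℂ) → ℝ)
    (hDcont : Continuous fun z : (Fin m → Fin o → Matrix (Fin d) (Fin d) ℂ) ×
        (Fin m → Fin o → Matrix (Fin d) (Fin d) ℂ) => D z.1 z.2)
    (hDnonneg : ∀ M N, 0 ≤ D M N)
    (hDfaithful : ∀ M N, D M N = 0 ↔ M = N)
    (hDtriangle : ∀ M N K, D M N ≤ D M K + D K N)
    (hDjointconv : ∀ η : ℝ, 0 ≤ η → η ≤ 1 → ∀ M₁ M₂ N₁ N₂,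
      D (η • M₁ + (1 - η) • M₂) (η • N₁ + (1 - η) • N₂)
        ≤ η * D M₁ N₁ + (1 - η) * D M₂ N₂)
    (R : (Fin m → Fin o → Matrix (Fin d) (Fin d) ℂ) → ℝ)
    (hR : ∀ M, R M = ⨅ F : 𝓕, D M F) :
    (∀ M, 0 ≤ R M) ∧
    (∀ M, R M = 0 ↔ M ∈ 𝓕) ∧
    (∀ η : ℝ, 0 ≤ η → η ≤ 1 → ∀ M N,
      R (η • M + (1 - η) • N) ≤ η * R M + (1 - η) * R N) ∧
    (∀ Λ : (Fin m → Fin o → Matrix (Fin d) (Fin d) ℂ) →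
           (Fin m → Fin o → Matrix (Fin d) (Fin d) ℂ),
      Λ '' 𝓕 ⊆ 𝓕 → (∀ M N, D (Λ M) (Λ N) ≤ D M N) → ∀ M, R (Λ M) ≤ R M) :=
  distance_induces_faithful_convex_monotone_general 𝓕 h𝓕ne h𝓕conv h𝓕cpt D hDcont hDnonneg hDfaithful
    hDjointconv R hR
end

section
/- Let M and N be measurement assemblages in dimension d with m settings, o outcomes and weighting p. Let q : Fin m' → ℝ with q y ≥ 0 and ∑ y, q y = 1, let pc : Fin m' → Fin m → ℝ with pc y x ≥ 0 and ∑ x, pc y x = 1 for every y, let r : Fin m' → Fin m → Fin o → Fin o' → ℝ with r y x a b ≥ 0 and ∑ b, r y x a b = 1 for all y, x, a, and suppose ∑ y, q y * pc y x = p x for every x. Define the simulated assemblages M' y b = ∑ x, ∑ a, (pc y x * r y x a b) • M x a and N' y b = ∑ x, ∑ a, (pc y x * r y x a b) • N x a. Then M' and N' are measurement assemblages in dimension d with m' settings and o' outcomes, and the weighted diamond distance (with weights q) satisfies D⋄(M',N') ≤ D⋄(M,N). -/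
open Matrix Kronecker BigOperators ComplexOrder

noncomputable section

def IsDensityMatrix {n : Type*} [Fintype n] [DecidableEq n] (ρ : Matrix n n ℂ) : Prop :=
  ρ.PosSemidef ∧ ρ.trace = 1

noncomputable def traceNorm {n : Type*} [Fintype n] [DecidableEq n] (X : Matrix n n ℂ) : ℝ :=
  (((Matrix.posSemidef_conjTranspose_mul_self X).1.eigenvectorUnitary : Matrix n n ℂ) *
    diagonal (((↑) : ℝ → ℂ) ∘ (√·) ∘ (Matrix.posSemidef_conjTranspose_mul_self X).1.eigenvalues) *
    (star (Matrix.posSemidef_conjTranspose_mul_self X).1.eigenvectorUnitary : Matrix n n ℂ)).trace.re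

noncomputable def specNorm {n : Type*} [Fintype n] [DecidableEq n] (X : Matrix n n ℂ) : ℝ :=
  ‖Matrix.toEuclideanCLM (𝕜 := ℂ) X‖

def ptrace1 {n e : Type*} [Fintype n] (ρ : Matrix (n × e) (n × e) ℂ) : Matrix e e ℂ :=
  Matrix.of fun j j' => ∑ i, ρ (i, j) (i, j')

def IsAssemblage {d m o : ℕ} (M : Fin m → Fin o → Matrix (Fin d) (Fin d) ℂ) : Prop :=
  (∀ x a, (M x a).PosSemidef) ∧ ∀ x, ∑ a, M x a = 1

def IsWeighting {m : ℕ} (p : Fin m → ℝ) : Prop :=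
  (∀ x, 0 < p x) ∧ ∑ x, p x = 1

noncomputable def Ddiamond {d m o : ℕ} (p : Fin m → ℝ)
    (M N : Fin m → Fin o → Matrix (Fin d) (Fin d) ℂ) : ℝ :=
  (1 / 2) * ∑ x, p x *
    ⨆ ρ : {ρ : Matrix (Fin d × Fin d) (Fin d × Fin d) ℂ // IsDensityMatrix ρ},
      ∑ a, traceNorm (ptrace1 (((M x a - N x a) ⊗ₖ (1 : Matrix (Fin d) (Fin d) ℂ)) * ρ.1))

def JointlyMeasurable {d m o : ℕ} (F : Fin m → Fin o → Matrix (Fin d) (Fin d) ℂ) : Prop :=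
  ∃ G : (Fin m → Fin o) → Matrix (Fin d) (Fin d) ℂ,
    (∀ lam, (G lam).PosSemidef) ∧ (∑ lam, G lam = 1) ∧
    ∀ x a, F x a = ∑ lam ∈ Finset.univ.filter (fun lam => lam x = a), G lam

noncomputable def Incomp {d m o : ℕ} (p : Fin m → ℝ)
    (M : Fin m → Fin o → Matrix (Fin d) (Fin d) ℂ) : ℝ :=
  ⨅ F : {F : Fin m → Fin o → Matrix (Fin d) (Fin d) ℂ // IsAssemblage F ∧ JointlyMeasurable F},
    Ddiamond p M F.1

/-!
A classical simulation writes each difference `M' y b - N' y b` as the nonnegative combination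
`∑ x, ∑ a, (pc y x * r y x a b) • (M x a - N x a)`. Since `X ↦ Tr₁[(X ⊗ 1) ρ]` is linear and the
trace norm is a seminorm, for every state `ρ` the `y`-th term of `D⋄(M', N')` is at most
`∑ x, pc y x * (x-th term of D⋄(M, N))`, because `∑ b, r y x a b = 1`; averaging over `y` with
weights `q` and using `∑ y, q y * pc y x = p x` gives the inequality.

The triangle inequality for the trace norm comes from the variational formula
`‖X‖₁ = max {Re tr (C * X) | C * Cᴴ ≤ 1}`, whose maximiser is the adjoint of the partial isometry
`X * |X|⁺` built with the continuous functional calculus.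
-/

namespace Matrix

open scoped MatrixOrder

section TraceNorm

variable {n : Type*} [Fintype n]

theorem re_trace_mono {A B : Matrix n n ℂ} (h : A ≤ B) : A.trace.re ≤ B.trace.re := by
  have := (le_iff.mp h).trace_nonneg
  rw [trace_sub, sub_nonneg] at this
  exact (Complex.le_def.mp this).1

theorem two_mul_re_trace_star_mul_le (A B : Matrix n n ℂ) :
    2 * (star A * B).trace.re ≤ (star A * A).trace.re + (star B * B).trace.re := by
  have h := re_trace_mono (star_mul_self_nonneg (A - B))
  have hBA : (star B * A).trace.re = (star A * B).trace.re := by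
    rw [← star_star (star B * A), star_mul, star_star, star_eq_conjTranspose, trace_conjTranspose,
      Complex.star_def, Complex.conj_re]
  simp only [star_sub, sub_mul, mul_sub, trace_sub, Complex.sub_re, trace_zero,
    Complex.zero_re] at h
  linarith

variable [DecidableEq n]

theorem traceNorm_eq_re_trace_cfcAbs (X : Matrix n n ℂ) :
    traceNorm X = (CFC.abs X).trace.re := by
  have hA := posSemidef_conjTranspose_mul_self X
  rw [CFC.abs, star_eq_conjTranspose, CFC.sqrt_eq_cfc, cfc_nnreal_eq_real _ _ hA.nonneg,
    hA.1.cfc_eq]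
  simp only [traceNorm, IsHermitian.cfc, Unitary.conjStarAlgAut_apply]
  congr 5
  funext i
  simp [Real.coe_sqrt, Real.coe_toNNReal', max_eq_left (hA.eigenvalues_nonneg i)]

theorem traceNorm_nonneg (X : Matrix n n ℂ) : 0 ≤ traceNorm X := by
  simpa [traceNorm_eq_re_trace_cfcAbs] using re_trace_mono (CFC.abs_nonneg X)

theorem traceNorm_smul (c : ℂ) (X : Matrix n n ℂ) : traceNorm (c • X) = ‖c‖ * traceNorm X := by
  rw [traceNorm_eq_re_trace_cfcAbs, traceNorm_eq_re_trace_cfcAbs, CFC.abs_smul, trace_smul]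
  simp

/-- `Q = cfc (·⁻¹) |X|` is a pseudo-inverse of `|X|` (recall `(0 : ℝ)⁻¹ = 0`), and `W = X * Q`. -/
theorem exists_partialIsometry_mul_abs (X : Matrix n n ℂ) :
    ∃ W : Matrix n n ℂ, star W * W ≤ 1 ∧ X = W * CFC.abs X ∧ star W * X = CFC.abs X := by
  set P := CFC.abs X
  set Q := cfc (·⁻¹ : ℝ → ℝ) P
  have hP : IsSelfAdjoint P := (CFC.abs_nonneg X).isSelfAdjoint
  have hQ : IsSelfAdjoint Q := cfc_predicate _ P
  have hinv : ContinuousOn (·⁻¹ : ℝ → ℝ) (spectrum ℝ P) := P.finite_real_spectrum.continuousOn _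
  have hPP : P * P = star X * X := CFC.abs_mul_abs X
  have hQPP : Q * P * P = P := by
    calc Q * P * P = cfc (fun t : ℝ => t⁻¹ * t * t) P := by
          rw [cfc_mul _ _ P, cfc_mul _ _ P, cfc_id' ℝ P]
      _ = cfc (fun t : ℝ => t) P := cfc_congr fun t _ => by
          by_cases ht : t = 0 <;> simp [ht]
      _ = P := cfc_id' ℝ P
  have hPQP : P * (Q * P) = P := by
    calc P * (Q * P) = cfc (fun t : ℝ => t * (t⁻¹ * t)) P := by
          rw [cfc_mul _ _ P, cfc_mul _ _ P, cfc_id' ℝ P]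
      _ = cfc (fun t : ℝ => t) P := cfc_congr fun t _ => by
          by_cases ht : t = 0 <;> simp [ht]
      _ = P := cfc_id' ℝ P
  have hQPPQ : Q * P * P * Q ≤ 1 := by
    calc Q * P * P * Q = cfc (fun t : ℝ => t⁻¹ * t * t * t⁻¹) P := by
          rw [cfc_mul _ _ P, cfc_mul _ _ P, cfc_mul _ _ P, cfc_id' ℝ P]
      _ ≤ 1 := cfc_le_one _ P fun t _ => by
          by_cases ht : t = 0 <;> simp [ht]
  have hXQP : X * (Q * P) = X := by
    have hker : P * (1 - Q * P) = 0 := by rw [mul_sub, mul_one, hPQP, sub_self]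
    have hD : (X * (1 - Q * P))ᴴ * (X * (1 - Q * P)) = 0 := by
      rw [← star_eq_conjTranspose, star_mul, mul_assoc, ← mul_assoc (star X), ← hPP,
        mul_assoc, hker, mul_zero, mul_zero]
    rw [conjTranspose_mul_self_eq_zero, mul_sub, mul_one, sub_eq_zero] at hD
    exact hD.symm
  refine ⟨X * Q, ?_, ?_, ?_⟩
  · rwa [star_mul, hQ.star_eq, mul_assoc, ← mul_assoc (star X), ← hPP, ← mul_assoc, ← mul_assoc]
  · rw [mul_assoc, hXQP]
  · rw [star_mul, hQ.star_eq, mul_assoc, ← hPP, ← mul_assoc, hQPP]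

/-- With `X = W * T * T`, `T = |X|^(1/2)`, this is `2 Re tr (Aᴴ B) ≤ tr (Aᴴ A) + tr (Bᴴ B)` for
`A = T * Wᴴ` and `B = T * C`. -/
theorem re_trace_mul_le_traceNorm {C : Matrix n n ℂ} (hC : C * star C ≤ 1) (X : Matrix n n ℂ) :
    (C * X).trace.re ≤ traceNorm X := by
  obtain ⟨W, -, hXW, hWX⟩ := exists_partialIsometry_mul_abs X
  set P := CFC.abs X
  set T := CFC.sqrt P
  have hTT : T * T = P := CFC.sqrt_mul_sqrt_self P (CFC.abs_nonneg X)
  have hT : IsSelfAdjoint T := (CFC.sqrt_nonneg P).isSelfAdjoint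
  have hAB : star (T * star W) * (T * C) = X * C := by
    rw [star_mul, star_star, hT.star_eq, hXW, mul_assoc W, ← mul_assoc T, hTT, mul_assoc]
  have hAA : (star (T * star W) * (T * star W)).trace = P.trace := by
    rw [star_mul, star_star, hT.star_eq, trace_mul_comm, mul_assoc, trace_mul_comm,
      mul_assoc, mul_assoc, hTT, ← hXW, hWX]
  have hBB : (star (T * C) * (T * C)).trace.re ≤ P.trace.re := by
    calc (star (T * C) * (T * C)).trace.re = (T * (C * star C) * T).trace.re := by
          rw [star_mul, hT.star_eq, trace_mul_comm]
          simp only [mul_assoc]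
      _ ≤ (T * 1 * T).trace.re := re_trace_mono (hT.conjugate_le_conjugate hC)
      _ = P.trace.re := by rw [mul_one, hTT]
  have := two_mul_re_trace_star_mul_le (T * star W) (T * C)
  rw [hAB, hAA, trace_mul_comm] at this
  rw [traceNorm_eq_re_trace_cfcAbs]
  linarith

theorem exists_re_trace_mul_eq_traceNorm (X : Matrix n n ℂ) :
    ∃ C : Matrix n n ℂ, C * star C ≤ 1 ∧ (C * X).trace.re = traceNorm X := by
  obtain ⟨W, hW, -, hWX⟩ := exists_partialIsometry_mul_abs X
  exact ⟨star W, by rwa [star_star], by rw [hWX, traceNorm_eq_re_trace_cfcAbs]⟩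

theorem traceNorm_add_le (X Y : Matrix n n ℂ) : traceNorm (X + Y) ≤ traceNorm X + traceNorm Y := by
  obtain ⟨C, hC, hCXY⟩ := exists_re_trace_mul_eq_traceNorm (X + Y)
  rw [← hCXY, mul_add, trace_add, Complex.add_re]
  exact add_le_add (re_trace_mul_le_traceNorm hC X) (re_trace_mul_le_traceNorm hC Y)

theorem norm_apply_le_traceNorm (X : Matrix n n ℂ) (u v : n) : ‖X u v‖ ≤ traceNorm X := by
  set z := X u v
  set c : ℂ := star z / ‖z‖
  have hc : ‖c‖ ^ 2 ≤ 1 := by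
    rcases eq_or_ne z 0 with hz | hz <;> simp [c, hz]
  have hC : single v u c * star (single v u c) ≤ 1 := by
    rw [star_eq_conjTranspose, conjTranspose_single, single_mul_single_same, ← diagonal_single,
      ← diagonal_one, le_iff, diagonal_sub]
    refine PosSemidef.diagonal fun i => ?_
    rcases eq_or_ne i v with rfl | hi
    · simp only [Pi.zero_apply, Pi.single_eq_same, Complex.star_def,
        Complex.mul_conj', sub_nonneg]
      exact_mod_cast hc
    · simp [Pi.single_eq_of_ne hi]
  have hcz : (c * z).re = ‖z‖ := by
    rw [div_mul_eq_mul_div, Complex.star_def, Complex.conj_mul', ← Complex.ofReal_pow,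
      ← Complex.ofReal_div, Complex.ofReal_re, sq, mul_self_div_self]
  have := re_trace_mul_le_traceNorm hC X
  rwa [trace_single_mul, smul_eq_mul, hcz] at this

variable (n) in
noncomputable def traceNormSeminorm : Seminorm ℂ (Matrix n n ℂ) :=
  Seminorm.of traceNorm traceNorm_add_le traceNorm_smul

theorem traceNormSeminorm_apply (X : Matrix n n ℂ) : traceNormSeminorm n X = traceNorm X := rfl

theorem traceNorm_sum_smul_le {ι : Type*} (s : Finset ι) (c : ι → ℝ) (hc : ∀ i ∈ s, 0 ≤ c i)
    (X : ι → Matrix n n ℂ) :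
    traceNorm (∑ i ∈ s, c i • X i) ≤ ∑ i ∈ s, c i * traceNorm (X i) := by
  refine (Finset.le_sum_of_subadditive _ (map_zero (traceNormSeminorm n)).le
    (map_add_le_add (traceNormSeminorm n)) s _).trans (Finset.sum_le_sum fun i hi => ?_)
  rw [traceNormSeminorm_apply, RCLike.real_smul_eq_coe_smul (K := ℂ), traceNorm_smul,
    RCLike.norm_ofReal, abs_of_nonneg (hc i hi)]

end TraceNorm

end Matrix

open Matrix

theorem Seminorm.le_sum_norm_mul_single {𝕜 m n : Type*} [SeminormedRing 𝕜] [Fintype m]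
    [Fintype n] [DecidableEq m] [DecidableEq n] (p : Seminorm 𝕜 (Matrix m n 𝕜))
    (X : Matrix m n 𝕜) : p X ≤ ∑ i, ∑ j, ‖X i j‖ * p (single i j 1) := by
  conv_lhs => rw [matrix_eq_sum_single X]
  refine (Finset.le_sum_of_subadditive p (map_zero p).le (map_add_le_add p) _ _).trans
    (Finset.sum_le_sum fun i _ => ?_)
  refine (Finset.le_sum_of_subadditive p (map_zero p).le (map_add_le_add p) _ _).trans_eq
    (Finset.sum_congr rfl fun j _ => ?_)
  rw [← map_smul_eq_mul, smul_single, smul_eq_mul, mul_one]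

section Density

variable {n : Type*} [Fintype n] [DecidableEq n]

theorem IsDensityMatrix.traceNorm_eq_one {ρ : Matrix n n ℂ} (hρ : IsDensityMatrix ρ) :
    traceNorm ρ = 1 := by
  open scoped MatrixOrder in
  rw [traceNorm_eq_re_trace_cfcAbs, CFC.abs_of_nonneg ρ hρ.1.nonneg, hρ.2, Complex.one_re]

theorem IsDensityMatrix.norm_apply_le_one {ρ : Matrix n n ℂ} (hρ : IsDensityMatrix ρ) (u v : n) :
    ‖ρ u v‖ ≤ 1 :=
  hρ.traceNorm_eq_one ▸ norm_apply_le_traceNorm ρ u v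

end Density

section PartialTrace

variable {n e : Type*} [Fintype n]

noncomputable def ptrace1LinearMap : Matrix (n × e) (n × e) ℂ →ₗ[ℂ] Matrix e e ℂ where
  toFun := ptrace1
  map_add' ρ σ := by ext; simp [ptrace1, Finset.sum_add_distrib]
  map_smul' c ρ := by ext; simp [ptrace1, Finset.mul_sum]

variable [DecidableEq n] [Fintype e] [DecidableEq e]

theorem traceNorm_ptrace1_mul_le (A : Matrix (n × e) (n × e) ℂ) {ρ : Matrix (n × e) (n × e) ℂ}
    (hρ : IsDensityMatrix ρ) :
    traceNorm (ptrace1 (A * ρ)) ≤ ∑ u, ∑ v, traceNorm (ptrace1 (A * single u v 1)) := by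
  let p := (traceNormSeminorm e).comp (ptrace1LinearMap ∘ₗ LinearMap.mulLeft ℂ A)
  refine (p.le_sum_norm_mul_single ρ).trans (Finset.sum_le_sum fun u _ =>
    Finset.sum_le_sum fun v _ => ?_)
  exact mul_le_of_le_one_left (apply_nonneg p _) (hρ.norm_apply_le_one u v)

end PartialTrace

/-- The diamond norm of the quantum-to-classical map `X ↦ ∑ a, tr (Δ a * X) • |a⟩⟨a|`: tensoring it
with the identity and applying it to `ρ` gives a block-diagonal matrix with blocks
`Tr₁[(Δ a ⊗ 1) ρ]`. -/
noncomputable def diamondNorm {n o : Type*} [Fintype n] [DecidableEq n] [Fintype o]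
    (Δ : o → Matrix n n ℂ) : ℝ :=
  ⨆ ρ : {ρ : Matrix (n × n) (n × n) ℂ // IsDensityMatrix ρ},
    ∑ a, traceNorm (ptrace1 ((Δ a ⊗ₖ (1 : Matrix n n ℂ)) * ρ.1))

section DiamondNorm

variable {n o : Type*} [Fintype n] [DecidableEq n] [Fintype o]

theorem Ddiamond_eq_sum_diamondNorm {d m o : ℕ} (p : Fin m → ℝ)
    (M N : Fin m → Fin o → Matrix (Fin d) (Fin d) ℂ) :
    Ddiamond p M N = 1 / 2 * ∑ x, p x * diamondNorm (fun a => M x a - N x a) :=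
  rfl

theorem diamondNorm_nonneg (Δ : o → Matrix n n ℂ) : 0 ≤ diamondNorm Δ :=
  Real.iSup_nonneg fun _ => Finset.sum_nonneg fun _ _ => traceNorm_nonneg _

theorem le_diamondNorm (Δ : o → Matrix n n ℂ) {ρ : Matrix (n × n) (n × n) ℂ}
    (hρ : IsDensityMatrix ρ) :
    ∑ a, traceNorm (ptrace1 ((Δ a ⊗ₖ (1 : Matrix n n ℂ)) * ρ)) ≤ diamondNorm Δ := by
  refine le_ciSup (f := fun ρ : {ρ // IsDensityMatrix ρ} =>
    ∑ a, traceNorm (ptrace1 ((Δ a ⊗ₖ (1 : Matrix n n ℂ)) * ρ.1))) ?_ ⟨ρ, hρ⟩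
  refine ⟨∑ a, ∑ u : n × n, ∑ v : n × n,
    traceNorm (ptrace1 ((Δ a ⊗ₖ (1 : Matrix n n ℂ)) * single u v (1 : ℂ))), ?_⟩
  rintro _ ⟨σ, rfl⟩
  exact Finset.sum_le_sum fun a _ => traceNorm_ptrace1_mul_le _ σ.2

theorem diamondNorm_sum_smul_le {ι o' : Type*} [Fintype ι] [Fintype o'] (pc : ι → ℝ)
    (r : ι → o → o' → ℝ) (hpc : ∀ x, 0 ≤ pc x) (hr0 : ∀ x a b, 0 ≤ r x a b)
    (hr1 : ∀ x a, ∑ b, r x a b = 1) (Δ : ι → o → Matrix n n ℂ) :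
    diamondNorm (fun b => ∑ x, ∑ a, (pc x * r x a b) • Δ x a) ≤
      ∑ x, pc x * diamondNorm (Δ x) := by
  refine Real.iSup_le (fun ρ => ?_)
    (Finset.sum_nonneg fun x _ => mul_nonneg (hpc x) (diamondNorm_nonneg _))
  let L : Matrix n n ℂ →ₗ[ℂ] Matrix n n ℂ := ptrace1LinearMap ∘ₗ LinearMap.mulRight ℂ ρ.1 ∘ₗ
    (kroneckerBilinear (R := ℂ)).flip (1 : Matrix n n ℂ)
  have hL : ∀ Y, L Y = ptrace1 ((Y ⊗ₖ (1 : Matrix n n ℂ)) * ρ.1) := fun _ => rfl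
  calc ∑ b, traceNorm (ptrace1 ((∑ x, ∑ a, (pc x * r x a b) • Δ x a) ⊗ₖ 1 * ρ.1))
      ≤ ∑ b, ∑ x, ∑ a, (pc x * r x a b) * traceNorm (L (Δ x a)) := by
        refine Finset.sum_le_sum fun b _ => ?_
        simp only [← hL, map_sum, LinearMap.map_smul_of_tower, ← Finset.sum_product']
        exact traceNorm_sum_smul_le _ _ (fun xa _ => mul_nonneg (hpc _) (hr0 _ _ _)) _
    _ = ∑ x, pc x * ∑ a, traceNorm (L (Δ x a)) := by
        rw [Finset.sum_comm]
        refine Finset.sum_congr rfl fun x _ => ?_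
        rw [Finset.sum_comm, Finset.mul_sum]
        refine Finset.sum_congr rfl fun a _ => ?_
        rw [← Finset.sum_mul, ← Finset.mul_sum, hr1, mul_one]
    _ ≤ ∑ x, pc x * diamondNorm (Δ x) :=
        Finset.sum_le_sum fun x _ => mul_le_mul_of_nonneg_left (le_diamondNorm _ ρ.2) (hpc x)

end DiamondNorm

theorem IsAssemblage.simulate {d m o m' o' : ℕ} {M : Fin m → Fin o → Matrix (Fin d) (Fin d) ℂ}
    (hM : IsAssemblage M) {pc : Fin m' → Fin m → ℝ} (hpc0 : ∀ y x, 0 ≤ pc y x)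
    (hpc1 : ∀ y, ∑ x, pc y x = 1) {r : Fin m' → Fin m → Fin o → Fin o' → ℝ}
    (hr0 : ∀ y x a b, 0 ≤ r y x a b) (hr1 : ∀ y x a, ∑ b, r y x a b = 1) :
    IsAssemblage (fun y b => ∑ x, ∑ a, (pc y x * r y x a b) • M x a) := by
  refine ⟨fun y b => posSemidef_sum _ fun x _ => posSemidef_sum _ fun a _ =>
    (hM.1 x a).smul (mul_nonneg (hpc0 y x) (hr0 y x a b)), fun y => ?_⟩
  calc ∑ b, ∑ x, ∑ a, (pc y x * r y x a b) • M x a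
      = ∑ x, pc y x • ∑ a, M x a := by
        rw [Finset.sum_comm]
        refine Finset.sum_congr rfl fun x _ => ?_
        rw [Finset.sum_comm, Finset.smul_sum]
        refine Finset.sum_congr rfl fun a _ => ?_
        rw [← Finset.sum_smul, ← Finset.mul_sum, hr1, mul_one]
    _ = 1 := by simp only [hM.2, ← Finset.sum_smul, hpc1, one_smul]

theorem diamond_distance_monotone_under_simulation_general {d m m' o o' : ℕ}
    (M N : Fin m → Fin o → Matrix (Fin d) (Fin d) ℂ)
    (hM : IsAssemblage M) (hN : IsAssemblage N)
    (p : Fin m → ℝ)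
    (q : Fin m' → ℝ) (hq0 : ∀ y, 0 ≤ q y)
    (pc : Fin m' → Fin m → ℝ) (hpc0 : ∀ y x, 0 ≤ pc y x) (hpc1 : ∀ y, ∑ x, pc y x = 1)
    (r : Fin m' → Fin m → Fin o → Fin o' → ℝ)
    (hr0 : ∀ y x a b, 0 ≤ r y x a b) (hr1 : ∀ y x a, ∑ b, r y x a b = 1)
    (hcomp : ∀ x, ∑ y, q y * pc y x = p x) :
    IsAssemblage (fun y b => ∑ x, ∑ a, (pc y x * r y x a b) • M x a) ∧
    IsAssemblage (fun y b => ∑ x, ∑ a, (pc y x * r y x a b) • N x a) ∧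
    Ddiamond q (fun y b => ∑ x, ∑ a, (pc y x * r y x a b) • M x a)
               (fun y b => ∑ x, ∑ a, (pc y x * r y x a b) • N x a)
      ≤ Ddiamond p M N := by
  refine ⟨hM.simulate hpc0 hpc1 hr0 hr1, hN.simulate hpc0 hpc1 hr0 hr1, ?_⟩
  have hdiff : ∀ y b, ∑ x, ∑ a, (pc y x * r y x a b) • M x a -
      ∑ x, ∑ a, (pc y x * r y x a b) • N x a =
      ∑ x, ∑ a, (pc y x * r y x a b) • (M x a - N x a) := by
    simp only [smul_sub, Finset.sum_sub_distrib, implies_true]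
  rw [Ddiamond_eq_sum_diamondNorm, Ddiamond_eq_sum_diamondNorm]
  simp only [hdiff]
  gcongr 1 / 2 * ?_
  calc ∑ y, q y * diamondNorm (fun b => ∑ x, ∑ a, (pc y x * r y x a b) • (M x a - N x a))
      ≤ ∑ y, q y * ∑ x, pc y x * diamondNorm (fun a => M x a - N x a) :=
        Finset.sum_le_sum fun y _ => mul_le_mul_of_nonneg_left
          (diamondNorm_sum_smul_le _ _ (hpc0 y) (hr0 y) (hr1 y) _) (hq0 y)
    _ = ∑ x, p x * diamondNorm (fun a => M x a - N x a) := by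
        simp only [Finset.mul_sum, ← mul_assoc]
        rw [Finset.sum_comm]
        simp only [← Finset.sum_mul, hcomp]

/-- Monotonicity of the weighted diamond distance under classical simulations
(mixtures of settings and classical post-processing of outcomes). -/
theorem diamond_distance_monotone_under_simulation {d m m' o o' : ℕ}
    (M N : Fin m → Fin o → Matrix (Fin d) (Fin d) ℂ)
    (hM : IsAssemblage M) (hN : IsAssemblage N)
    (p : Fin m → ℝ) (hp : IsWeighting p)
    (q : Fin m' → ℝ) (hq0 : ∀ y, 0 ≤ q y) (hq1 : ∑ y, q y = 1)
    (pc : Fin m' → Fin m → ℝ) (hpc0 : ∀ y x, 0 ≤ pc y x) (hpc1 : ∀ y, ∑ x, pc y x = 1)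
    (r : Fin m' → Fin m → Fin o → Fin o' → ℝ)
    (hr0 : ∀ y x a b, 0 ≤ r y x a b) (hr1 : ∀ y x a, ∑ b, r y x a b = 1)
    (hcomp : ∀ x, ∑ y, q y * pc y x = p x) :
    IsAssemblage (fun y b => ∑ x, ∑ a, (pc y x * r y x a b) • M x a) ∧
    IsAssemblage (fun y b => ∑ x, ∑ a, (pc y x * r y x a b) • N x a) ∧
    Ddiamond q (fun y b => ∑ x, ∑ a, (pc y x * r y x a b) • M x a)
               (fun y b => ∑ x, ∑ a, (pc y x * r y x a b) • N x a)
      ≤ Ddiamond p M N :=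
  diamond_distance_monotone_under_simulation_general M N hM hN p q hq0 pc hpc0 hpc1 r hr0 hr1 hcomp

end
end

section
/- Let σ be a state assemblage in dimension d with m settings and o outcomes and weighting pA, and let N be a measurement assemblage in dimension d with m' settings, o' outcomes and weighting pB. Define the behavior q x y a b = Re (Tr (N y b * σ x a)). Then the nonlocality of q with weights p(x,y) = pA x · pB y is bounded by the steerability of σ: N(q) ≤ S(σ,pA). -/
open Matrix Kronecker BigOperators ComplexOrder

noncomputable section

def IsStateAssemblage {d m o : ℕ} (σ : Fin m → Fin o → Matrix (Fin d) (Fin d) ℂ) : Prop :=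
  (∀ x a, (σ x a).PosSemidef) ∧ ∀ x, ∑ a, (σ x a).trace = 1

def HasLHSModel {d m o : ℕ} (σ : Fin m → Fin o → Matrix (Fin d) (Fin d) ℂ) : Prop :=
  ∃ σ' : (Fin m → Fin o) → Matrix (Fin d) (Fin d) ℂ,
    (∀ lam, (σ' lam).PosSemidef) ∧ (∑ lam, (σ' lam).trace = 1) ∧
    ∀ x a, σ x a = ∑ lam ∈ Finset.univ.filter (fun lam => lam x = a), σ' lam

noncomputable def Steerability {d m o : ℕ} (p : Fin m → ℝ)
    (σ : Fin m → Fin o → Matrix (Fin d) (Fin d) ℂ) : ℝ :=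
  ⨅ τ : {τ : Fin m → Fin o → Matrix (Fin d) (Fin d) ℂ // IsStateAssemblage τ ∧ HasLHSModel τ},
    (1 / 2) * ∑ x, p x * ∑ a, traceNorm (σ x a - τ.1 x a)

def IsLocalBehavior {m m' o o' : ℕ} (t : Fin m → Fin m' → Fin o → Fin o' → ℝ) : Prop :=
  ∃ π : (Fin m → Fin o) × (Fin m' → Fin o') → ℝ,
    (∀ lam, 0 ≤ π lam) ∧ (∑ lam, π lam = 1) ∧
    ∀ x y a b, t x y a b =
      ∑ lam ∈ Finset.univ.filter
        (fun lam : (Fin m → Fin o) × (Fin m' → Fin o') => lam.1 x = a ∧ lam.2 y = b), π lam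

noncomputable def Nonlocality {m m' o o' : ℕ} (pA : Fin m → ℝ) (pB : Fin m' → ℝ)
    (q : Fin m → Fin m' → Fin o → Fin o' → ℝ) : ℝ :=
  ⨅ t : {t : Fin m → Fin m' → Fin o → Fin o' → ℝ // IsLocalBehavior t},
    (1 / 2) * ∑ x, ∑ y, ∑ a, ∑ b, pA x * pB y * |q x y a b - t.1 x y a b|

/-! Measuring Bob's POVMs on an LHS assemblage `τ` yields a local behavior: conditionally on
Alice's hidden deterministic strategy, Bob's outcomes for the different settings can be drawn
independently. For fixed `x`, `y`, `a`, its distance to `q` is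
`∑ b, |Re Tr (N y b (σ x a - τ x a))| ≤ ‖σ x a - τ x a‖₁`, a POVM being unable to increase the
trace norm of a Hermitian matrix; averaging over `y` with weights summing to one then bounds
the nonlocality by the cost of `τ` in the steerability. -/

open Finset

section TraceNorm

open scoped MatrixOrder

variable {n : Type*} [Fintype n] [DecidableEq n]

theorem traceNorm_eq_re_trace_abs (X : Matrix n n ℂ) : traceNorm X = (CFC.abs X).trace.re := by
  rw [CFC.abs, CFC.sqrt_eq_real_sqrt _ (star_mul_self_nonneg X), cfcₙ_eq_cfc,
    star_eq_conjTranspose, (isHermitian_conjTranspose_mul_self X).cfc_eq]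
  rfl

theorem Matrix.PosSemidef.re_trace_mul_nonneg {A B : Matrix n n ℂ} (hA : A.PosSemidef)
    (hB : B.PosSemidef) : 0 ≤ (A * B).trace.re := by
  obtain ⟨b, rfl⟩ := CStarAlgebra.nonneg_iff_eq_star_mul_self.mp hB.nonneg
  rw [← Matrix.mul_assoc, Matrix.trace_mul_cycle, star_eq_conjTranspose]
  exact (Complex.nonneg_iff.mp (hA.mul_mul_conjTranspose_same b).trace_nonneg).1

/-- Split `Δ = Δ⁺ - Δ⁻`: each outcome contributes at most `Tr (E b Δ⁺) + Tr (E b Δ⁻)`, and these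
add up to `Tr (Δ⁺ + Δ⁻) = Tr |Δ|`. -/
theorem sum_abs_re_trace_mul_le_traceNorm {ι : Type*} [Fintype ι] {E : ι → Matrix n n ℂ}
    (hE : ∀ b, (E b).PosSemidef) (hE_sum : ∑ b, E b = 1) {Δ : Matrix n n ℂ}
    (hΔ : Δ.IsHermitian) : ∑ b, |(E b * Δ).trace.re| ≤ traceNorm Δ := by
  have hpos : (Δ⁺).PosSemidef := (CFC.posPart_nonneg Δ).posSemidef
  have hneg : (Δ⁻).PosSemidef := (CFC.negPart_nonneg Δ).posSemidef
  calc ∑ b, |(E b * Δ).trace.re|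
      ≤ ∑ b, ((E b * Δ⁺).trace.re + (E b * Δ⁻).trace.re) := by
        refine sum_le_sum fun b _ => ?_
        have h₁ := (hE b).re_trace_mul_nonneg hpos
        have h₂ := (hE b).re_trace_mul_nonneg hneg
        nth_rw 1 [← CFC.posPart_sub_negPart Δ]
        rw [Matrix.mul_sub, Matrix.trace_sub, Complex.sub_re]
        exact abs_le.mpr ⟨by linarith, by linarith⟩
    _ = traceNorm Δ := by
        simp only [← Complex.add_re, ← Matrix.trace_add, ← Matrix.mul_add, ← Complex.re_sum,
          ← Matrix.trace_sum, ← sum_mul, hE_sum, Matrix.one_mul]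
        rw [CFC.posPart_add_negPart Δ, traceNorm_eq_re_trace_abs]

end TraceNorm

theorem sum_prod_filter_apply_eq_of_sum_eq_one {ι κ R : Type*} [Fintype ι] [DecidableEq ι]
    [Fintype κ] [DecidableEq κ] [CommSemiring R] {f : ι → κ → R} (hf : ∀ j, ∑ c, f j c = 1) (i : ι) (a : κ) :
    ∑ μ ∈ univ.filter (fun μ : ι → κ => μ i = a), ∏ j, f j (μ j) = f i a := by
  rw [← Fintype.piFinset_univ, ← Fintype.piFinset_update_singleton_eq_filter_piFinset_eq
    (fun _ => univ) i (mem_univ a), ← prod_univ_sum]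
  calc ∏ j, ∑ c ∈ Function.update (fun _ => univ) i {a} j, f j c
      = ∏ j, if j = i then f i a else 1 := by
        refine prod_congr rfl fun j _ => ?_
        obtain rfl | hji := eq_or_ne j i <;> simp [*]
    _ = f i a := by simp

/-- Hidden variable `(l, μ)`: given `l`, Bob draws each answer `μ y` independently from
`r l y / w l` (junk where `w l = 0`, but such `l` carry no weight). -/
theorem isLocalBehavior_of_sum_filter {m m' o o' : ℕ}
    {t : Fin m → Fin m' → Fin o → Fin o' → ℝ} (w : (Fin m → Fin o) → ℝ) (hw : ∀ l, 0 ≤ w l)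
    (hw_sum : ∑ l, w l = 1) (r : (Fin m → Fin o) → Fin m' → Fin o' → ℝ) (hr : ∀ l y b, 0 ≤ r l y b)
    (hr_sum : ∀ l y, ∑ b, r l y b = w l)
    (ht : ∀ x y a b, t x y a b = ∑ l ∈ univ.filter (fun l => l x = a), r l y b) :
    IsLocalBehavior t := by
  set P : (Fin m → Fin o) → Fin m' → Fin o' → ℝ := fun l y b => r l y b / w l
  have hP_sum : ∀ l, w l ≠ 0 → ∀ y, ∑ b, P l y b = 1 := fun l hl y => by
    rw [← sum_div, hr_sum, div_self hl]
  have hr_zero : ∀ l, w l = 0 → ∀ y b, r l y b = 0 := fun l hl y b =>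
    (sum_eq_zero_iff_of_nonneg fun b _ => hr l y b).mp ((hr_sum l y).trans hl) b (mem_univ b)
  have hbob_sum : ∀ l, ∑ μ : Fin m' → Fin o', w l * ∏ y, P l y (μ y) = w l := fun l => by
    by_cases hl : w l = 0
    · simp [hl]
    · rw [← mul_sum, ← Fintype.prod_sum, prod_congr rfl fun y _ => hP_sum l hl y, prod_const_one,
        mul_one]
  have hbob_marginal : ∀ l y b,
      ∑ μ ∈ univ.filter (fun μ : Fin m' → Fin o' => μ y = b), w l * ∏ y', P l y' (μ y') =
        r l y b := fun l y b => by
    by_cases hl : w l = 0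
    · simp [hl, hr_zero l hl y b]
    · rw [← mul_sum, sum_prod_filter_apply_eq_of_sum_eq_one (hP_sum l hl), mul_div_cancel₀ _ hl]
  refine ⟨fun p => w p.1 * ∏ y, P p.1 y (p.2 y), fun p => ?_, ?_, fun x y a b => ?_⟩
  · exact mul_nonneg (hw p.1) (prod_nonneg fun y _ => div_nonneg (hr _ _ _) (hw p.1))
  · rw [Fintype.sum_prod_type]
    simp only [hbob_sum, hw_sum]
  · rw [ht, ← univ_product_univ, filter_product (fun l : Fin m → Fin o => l x = a)
      (fun μ : Fin m' → Fin o' => μ y = b), sum_product]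
    exact sum_congr rfl fun l _ => (hbob_marginal l y b).symm

section Assemblages

variable {d m m' o o' : ℕ}

theorem HasLHSModel.isLocalBehavior {τ : Fin m → Fin o → Matrix (Fin d) (Fin d) ℂ}
    (hτ : HasLHSModel τ) {N : Fin m' → Fin o' → Matrix (Fin d) (Fin d) ℂ} (hN : IsAssemblage N) :
    IsLocalBehavior fun x y a b => (N y b * τ x a).trace.re := by
  obtain ⟨σ', hσ', hσ'_tr, hτ_eq⟩ := hτ
  refine isLocalBehavior_of_sum_filter (fun l => (σ' l).trace.re)
    (fun l => (Complex.nonneg_iff.mp (hσ' l).trace_nonneg).1)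
    (by rw [← Complex.re_sum, hσ'_tr, Complex.one_re])
    (fun l y b => (N y b * σ' l).trace.re) (fun l y b => (hN.1 y b).re_trace_mul_nonneg (hσ' l))
    (fun l y => ?_) (fun x y a b => ?_)
  · rw [← Complex.re_sum, ← Matrix.trace_sum, ← sum_mul, hN.2 y, Matrix.one_mul]
  · rw [hτ_eq, Matrix.mul_sum, Matrix.trace_sum, Complex.re_sum]

theorem isStateAssemblage_and_hasLHSModel_of_hiddenStates
    (σ' : (Fin m → Fin o) → Matrix (Fin d) (Fin d) ℂ) (hσ' : ∀ l, (σ' l).PosSemidef)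
    (hσ'_tr : ∑ l, (σ' l).trace = 1) :
    IsStateAssemblage (fun x a => ∑ l ∈ univ.filter (fun l => l x = a), σ' l) ∧
      HasLHSModel (fun x a => ∑ l ∈ univ.filter (fun l => l x = a), σ' l) := by
  refine ⟨⟨fun x a => posSemidef_sum _ fun l _ => hσ' l, fun x => ?_⟩, σ', hσ', hσ'_tr,
    fun _ _ => rfl⟩
  simp only [Matrix.trace_sum]
  rw [sum_fiberwise univ (fun l => l x) fun l => (σ' l).trace, hσ'_tr]

/-- Witness: always answer some `a₀`, the hidden state being the reduced state `∑ a, σ x₀ a`. -/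
theorem IsStateAssemblage.nonempty_lhs {σ : Fin m → Fin o → Matrix (Fin d) (Fin d) ℂ}
    (hσ : IsStateAssemblage σ) (hm : 0 < m) :
    Nonempty {τ : Fin m → Fin o → Matrix (Fin d) (Fin d) ℂ //
      IsStateAssemblage τ ∧ HasLHSModel τ} := by
  set x₀ : Fin m := ⟨0, hm⟩
  obtain ⟨a₀, -, -⟩ := exists_ne_zero_of_sum_ne_zero ((hσ.2 x₀).symm ▸ one_ne_zero)
  set ρ := ∑ a, σ x₀ a
  refine ⟨⟨_, isStateAssemblage_and_hasLHSModel_of_hiddenStates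
    (fun l => if l = fun _ => a₀ then ρ else 0) (fun l => ?_) ?_⟩⟩
  · split_ifs
    · exact posSemidef_sum _ fun a _ => hσ.1 x₀ a
    · exact .zero
  · simp only [apply_ite Matrix.trace, Matrix.trace_zero, sum_ite_eq', mem_univ, if_true, ρ,
      Matrix.trace_sum, hσ.2 x₀]

theorem nonlocality_le_of_isLocalBehavior {pA : Fin m → ℝ} {pB : Fin m' → ℝ}
    (hpA : ∀ x, 0 ≤ pA x) (hpB : ∀ y, 0 ≤ pB y) {q t : Fin m → Fin m' → Fin o → Fin o' → ℝ}
    (ht : IsLocalBehavior t) :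
    Nonlocality pA pB q ≤ (1 / 2) * ∑ x, ∑ y, ∑ a, ∑ b, pA x * pB y * |q x y a b - t x y a b| := by
  refine ciInf_le (f := fun s : {t // IsLocalBehavior t} =>
    (1 / 2 : ℝ) * ∑ x, ∑ y, ∑ a, ∑ b, pA x * pB y * |q x y a b - s.1 x y a b|) ⟨0, ?_⟩ ⟨t, ht⟩
  rintro _ ⟨s, rfl⟩
  exact mul_nonneg (by norm_num) <| sum_nonneg fun x _ => sum_nonneg fun y _ =>
    sum_nonneg fun a _ => sum_nonneg fun b _ =>
      mul_nonneg (mul_nonneg (hpA x) (hpB y)) (abs_nonneg _)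

theorem sum_weighted_abs_sub_le_sum_traceNorm_sub {σ τ : Fin m → Fin o → Matrix (Fin d) (Fin d) ℂ}
    (hσ : ∀ x a, (σ x a).IsHermitian) (hτ : ∀ x a, (τ x a).IsHermitian)
    {N : Fin m' → Fin o' → Matrix (Fin d) (Fin d) ℂ} (hN : IsAssemblage N)
    {pA : Fin m → ℝ} (hpA : ∀ x, 0 ≤ pA x) {pB : Fin m' → ℝ} (hpB : IsWeighting pB) :
    ∑ x, ∑ y, ∑ a, ∑ b,
        pA x * pB y * |(N y b * σ x a).trace.re - (N y b * τ x a).trace.re| ≤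
      ∑ x, pA x * ∑ a, traceNorm (σ x a - τ x a) := by
  have hy : ∀ x y, ∑ a, ∑ b, |(N y b * σ x a).trace.re - (N y b * τ x a).trace.re| ≤
      ∑ a, traceNorm (σ x a - τ x a) := fun x y => sum_le_sum fun a _ => by
    simpa only [Matrix.mul_sub, Matrix.trace_sub, Complex.sub_re] using
      sum_abs_re_trace_mul_le_traceNorm (hN.1 y) (hN.2 y) ((hσ x a).sub (hτ x a))
  refine sum_le_sum fun x _ => ?_
  calc ∑ y, ∑ a, ∑ b, pA x * pB y * |(N y b * σ x a).trace.re - (N y b * τ x a).trace.re|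
      = pA x * ∑ y, pB y * ∑ a, ∑ b, |(N y b * σ x a).trace.re - (N y b * τ x a).trace.re| := by
        simp only [mul_sum, mul_assoc]
    _ ≤ pA x * ∑ y, pB y * ∑ a, traceNorm (σ x a - τ x a) :=
        mul_le_mul_of_nonneg_left (sum_le_sum fun y _ =>
          mul_le_mul_of_nonneg_left (hy x y) (hpB.1 y).le) (hpA x)
    _ = pA x * ∑ a, traceNorm (σ x a - τ x a) := by rw [← sum_mul, hpB.2, one_mul]

end Assemblages

/-- The nonlocality of the behavior obtained by measuring `N` on a state assemblage `σ`
is bounded by the steerability of `σ`. -/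
theorem nonlocality_le_steerability {d m m' o o' : ℕ}
    (σ : Fin m → Fin o → Matrix (Fin d) (Fin d) ℂ) (hσ : IsStateAssemblage σ)
    (pA : Fin m → ℝ) (hpA : IsWeighting pA)
    (N : Fin m' → Fin o' → Matrix (Fin d) (Fin d) ℂ) (hN : IsAssemblage N)
    (pB : Fin m' → ℝ) (hpB : IsWeighting pB) :
    Nonlocality pA pB (fun x y a b => ((N y b * σ x a).trace).re) ≤ Steerability pA σ := by
  obtain rfl | hm := Nat.eq_zero_or_pos m
  · simp [Nonlocality, Steerability]
  have := hσ.nonempty_lhs hm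
  refine le_ciInf fun ⟨τ, hτ, hτ_lhs⟩ => ?_
  calc Nonlocality pA pB (fun x y a b => ((N y b * σ x a).trace).re)
      ≤ (1 / 2) * ∑ x, ∑ y, ∑ a, ∑ b,
          pA x * pB y * |(N y b * σ x a).trace.re - (N y b * τ x a).trace.re| :=
        nonlocality_le_of_isLocalBehavior (fun x => (hpA.1 x).le) (fun y => (hpB.1 y).le)
          (hτ_lhs.isLocalBehavior hN)
    _ ≤ (1 / 2) * ∑ x, pA x * ∑ a, traceNorm (σ x a - τ x a) := by
        gcongr _ * ?_
        exact sum_weighted_abs_sub_le_sum_traceNorm_sub (fun x a => (hσ.1 x a).1)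
          (fun x a => (hτ.1 x a).1) hN (fun x => (hpA.1 x).le) hpB
end
end
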